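/- arXiv:1903.09707 — 5 statements merged into one kernel-verified Lean document; each statement's English description precedes it below -/
import Mathlib

section
/- Let (Ω, F, P) be a probability space, let d ∈ ℕ, let U be a separable real Hilbert space, let O ⊆ ℝ^d (with the Euclidean inner product and standard orthonormal basis e₁, …, e_d) be an open set, let D ⊆ O be a countable dense subset, let T be a set, let O^ℝ = {(x, p) ∈ O × ℝ : x + p e_i ∈ O for all i ∈ {1, …, d}}, and let X : T × O × Ω → U and Z : T × O^ℝ × Ω → (ℝ^d →L U) (continuous linear maps from ℝ^d to U) be random fields (i.e., for every fixed parameter the map in ω is measurable). Assume: (a) for all x ∈ D, all rational p ≠ 0, and all i ∈ {1, …, d} with x + p e_i ∈ O, it holds P-a.s. that for all t ∈ T one has Z_t(x, p) e_i = (X_t^{x + p e_i} − X_t^x)/p; and (b) for P-almost all ω ∈ Ω and all t ∈ T, the maps O ∋ x ↦ X_t^x(ω) ∈ U and O^ℝ ∋ (x, p) ↦ Z_t(x, p, ω) are continuous. Then there exists a set Ω₀ ∈ F with P(Ω₀) = 1 such that for every ω ∈ Ω₀ and every t ∈ T the map O ∋ x ↦ X_t^x(ω) ∈ U is continuously Fréchet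 differentiable and for all x ∈ O its Fréchet derivative at x equals Z_t(x, 0, ω). -/
open MeasureTheory
open scoped BigOperators RealInnerProductSpace

lemma euclid_abs_apply_le_norm {d : ℕ} (h : EuclideanSpace ℝ (Fin d)) (i : Fin d) :
    |h i| ≤ ‖h‖ := by
  rw [EuclideanSpace.norm_eq]
  calc |h i| = Real.sqrt ((h i) ^ 2) := (Real.sqrt_sq_eq_abs _).symm
    _ ≤ Real.sqrt (∑ j, ‖h j‖ ^ 2) := by
        apply Real.sqrt_le_sqrt
        have := Finset.single_le_sum (f := fun j => ‖h j‖ ^ 2)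
          (fun j _ => sq_nonneg _) (Finset.mem_univ i)
        simpa [Real.norm_eq_abs, sq_abs] using this

lemma euclid_sum_single {d : ℕ} (h : EuclideanSpace ℝ (Fin d)) :
    ∑ i, h i • EuclideanSpace.single i (1 : ℝ) = h := by
  have := (EuclideanSpace.basisFun (Fin d) ℝ).sum_repr h
  simpa [EuclideanSpace.basisFun_apply, EuclideanSpace.basisFun_repr] using this

set_option maxHeartbeats 2000000 in
/-- Lemma 2.1 of the paper in the finite-dimensional case: if the difference quotients
of the random field `X : T × O × Ω → U` admit a version `Z` such that, almost surely,
for all `t ∈ T` the maps `x ↦ X_t^x` and `(x, p) ↦ Z_t(x, p)` are continuous (on `O`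
and on `O^ℝ`, respectively), and for all `x` in a countable dense subset `D ⊆ O`, all
rational `p ≠ 0` and all coordinate directions `eᵢ` with `x + p eᵢ ∈ O` it holds a.s.
that `Z_t(x, p) eᵢ = (X_t^{x + p eᵢ} − X_t^x)/p` for all `t`, then there is a full
measure set `Ω₀` on which, for every `t`, the map `x ↦ X_t^x` is continuously Fréchet
differentiable on `O` with derivative `Z_t(x, 0)` at every `x ∈ O`. -/
theorem differentiable_version_of_continuous_difference_quotients
    {Ω : Type*} [MeasurableSpace Ω] (P : Measure Ω) [IsProbabilityMeasure P]
    (d : ℕ) {U : Type*} [NormedAddCommGroup U] [InnerProductSpace ℝ U]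
    [CompleteSpace U] [SecondCountableTopology U]
    [MeasurableSpace U] [BorelSpace U]
    [MeasurableSpace (EuclideanSpace ℝ (Fin d) →L[ℝ] U)]
    [BorelSpace (EuclideanSpace ℝ (Fin d) →L[ℝ] U)]
    (O : Set (EuclideanSpace ℝ (Fin d))) (hO : IsOpen O)
    (D : Set (EuclideanSpace ℝ (Fin d))) (hDO : D ⊆ O) (hDcount : D.Countable)
    (hDdense : O ⊆ closure D)
    (T : Type*)
    (X : T → EuclideanSpace ℝ (Fin d) → Ω → U)
    (Z : T → EuclideanSpace ℝ (Fin d) × ℝ → Ω → (EuclideanSpace ℝ (Fin d) →L[ℝ] U))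
    -- `X` and `Z` are random fields:
    (hXmeas : ∀ t, ∀ x ∈ O, Measurable (X t x))
    (hZmeas : ∀ t, ∀ q ∈ {q : EuclideanSpace ℝ (Fin d) × ℝ | q.1 ∈ O ∧
        ∀ i : Fin d, q.1 + q.2 • EuclideanSpace.single i (1 : ℝ) ∈ O},
      Measurable (Z t q))
    -- (a) the difference quotient relation on the countable dense set:
    (ha : ∀ x ∈ D, ∀ p : ℚ, p ≠ 0 → ∀ i : Fin d,
      x + (p : ℝ) • EuclideanSpace.single i (1 : ℝ) ∈ O →
      ∀ᵐ ω ∂P, ∀ t : T,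
        Z t (x, (p : ℝ)) ω (EuclideanSpace.single i (1 : ℝ))
          = (p : ℝ)⁻¹ • (X t (x + (p : ℝ) • EuclideanSpace.single i (1 : ℝ)) ω - X t x ω))
    -- (b) almost sure continuity of the sample fields:
    (hb : ∀ᵐ ω ∂P, ∀ t : T,
      ContinuousOn (fun y => X t y ω) O ∧
      ContinuousOn (fun q => Z t q ω)
        {q : EuclideanSpace ℝ (Fin d) × ℝ | q.1 ∈ O ∧
          ∀ i : Fin d, q.1 + q.2 • EuclideanSpace.single i (1 : ℝ) ∈ O}) :
    ∃ Ω₀ : Set Ω, MeasurableSet Ω₀ ∧ P Ω₀ = 1 ∧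
      ∀ ω ∈ Ω₀, ∀ t : T,
        (∀ x ∈ O, HasFDerivAt (fun y => X t y ω) (Z t (x, 0) ω) x) ∧
        ContinuousOn (fun x => Z t (x, 0) ω) O := by
  classical
  set S : Set (EuclideanSpace ℝ (Fin d) × ℝ) :=
    {q | q.1 ∈ O ∧ ∀ i : Fin d, q.1 + q.2 • EuclideanSpace.single i (1 : ℝ) ∈ O} with hSdef
  -- S is open
  have hSopen : IsOpen S := by
    have h1 : IsOpen {q : EuclideanSpace ℝ (Fin d) × ℝ | q.1 ∈ O} := hO.preimage continuous_fst
    have h2 : ∀ i : Fin d, IsOpen {q : EuclideanSpace ℝ (Fin d) × ℝ |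
        q.1 + q.2 • EuclideanSpace.single i (1 : ℝ) ∈ O} := fun i => hO.preimage (by fun_prop)
    have heq : S = {q : EuclideanSpace ℝ (Fin d) × ℝ | q.1 ∈ O} ∩
        ⋂ i : Fin d, {q : EuclideanSpace ℝ (Fin d) × ℝ |
          q.1 + q.2 • EuclideanSpace.single i (1 : ℝ) ∈ O} := by
      ext q; simp [hSdef, Set.mem_iInter]
    rw [heq]
    exact h1.inter (isOpen_iInter_of_finite h2)
  -- combine all a.e. hypotheses
  have hae : ∀ᵐ ω ∂P, (∀ x ∈ D, ∀ p : ℚ, p ≠ 0 → ∀ i : Fin d,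
      x + (p : ℝ) • EuclideanSpace.single i (1 : ℝ) ∈ O →
      ∀ t : T, Z t (x, (p : ℝ)) ω (EuclideanSpace.single i (1 : ℝ))
          = (p : ℝ)⁻¹ • (X t (x + (p : ℝ) • EuclideanSpace.single i (1 : ℝ)) ω - X t x ω)) ∧
      (∀ t : T, ContinuousOn (fun y => X t y ω) O ∧
        ContinuousOn (fun q => Z t q ω) S) := by
    refine Filter.Eventually.and ?_ hb
    rw [ae_ball_iff hDcount]
    intro x hx
    rw [ae_all_iff]
    intro p
    rw [Filter.eventually_imp_distrib_left]
    intro hp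
    rw [ae_all_iff]
    intro i
    rw [Filter.eventually_imp_distrib_left]
    intro hmem
    exact ha x hx p hp i hmem
  obtain ⟨N, hNsub, hNmeas, hNnull⟩ := exists_measurable_superset_of_null (ae_iff.mp hae)
  refine ⟨Nᶜ, hNmeas.compl, ?_, ?_⟩
  · rw [measure_compl hNmeas (measure_ne_top _ _), hNnull, measure_univ]; simp
  intro ω hω t
  have hG : (∀ x ∈ D, ∀ p : ℚ, p ≠ 0 → ∀ i : Fin d,
      x + (p : ℝ) • EuclideanSpace.single i (1 : ℝ) ∈ O →
      ∀ t : T, Z t (x, (p : ℝ)) ω (EuclideanSpace.single i (1 : ℝ))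
          = (p : ℝ)⁻¹ • (X t (x + (p : ℝ) • EuclideanSpace.single i (1 : ℝ)) ω - X t x ω)) ∧
      (∀ t : T, ContinuousOn (fun y => X t y ω) O ∧
        ContinuousOn (fun q => Z t q ω) S) := by
    by_contra hcon
    exact hω (hNsub hcon)
  obtain ⟨hrel, hcont⟩ := hG
  obtain ⟨hXc, hZc⟩ := hcont t
  -- Step A: the difference quotient identity on all of S
  have key : ∀ q ∈ S, ∀ i : Fin d,
      X t (q.1 + q.2 • EuclideanSpace.single i (1 : ℝ)) ω - X t q.1 ω
        = q.2 • Z t q ω (EuclideanSpace.single i (1 : ℝ)) := by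
    intro q hq i
    set f : EuclideanSpace ℝ (Fin d) × ℝ → U := fun q' =>
      X t (q'.1 + q'.2 • EuclideanSpace.single i (1 : ℝ)) ω - X t q'.1 ω
        - q'.2 • Z t q' ω (EuclideanSpace.single i (1 : ℝ)) with hfdef
    set E₀ : Set (EuclideanSpace ℝ (Fin d) × ℝ) :=
      {q' | q' ∈ S ∧ q'.1 ∈ D ∧ ∃ r : ℚ, r ≠ 0 ∧ (r : ℝ) = q'.2} with hE₀def
    have hE₀S : E₀ ⊆ S := fun q' hq' => hq'.1
    have hfc : ContinuousOn f S := by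
      apply ContinuousOn.sub
      apply ContinuousOn.sub
      · exact hXc.comp (by fun_prop) (fun q' hq' => hq'.2 i)
      · exact hXc.comp continuous_fst.continuousOn (fun q' hq' => hq'.1)
      · exact continuous_snd.continuousOn.smul (hZc.clm_apply continuousOn_const)
    have hf0 : ∀ q' ∈ E₀, f q' = 0 := by
      rintro ⟨x', p'⟩ ⟨hq'S, hq'D, r, hr0, hr⟩
      subst hr
      have hmem : x' + (r : ℝ) • EuclideanSpace.single i (1 : ℝ) ∈ O := hq'S.2 i
      have hth := hrel x' hq'D r hr0 i hmem t
      have hrne : (r : ℝ) ≠ 0 := by exact_mod_cast hr0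
      simp only [hfdef]
      rw [hth, smul_smul, mul_inv_cancel₀ hrne, one_smul]
      abel
    -- q is in the closure of E₀
    have hclos : q ∈ closure E₀ := by
      rw [Metric.mem_closure_iff]
      intro ε hε
      obtain ⟨δ, hδ, hball⟩ := Metric.isOpen_iff.mp hSopen q hq
      set ε' := min ε δ with hε'def
      have hε' : 0 < ε' := lt_min hε hδ
      obtain ⟨x', hx'D, hx'⟩ := Metric.mem_closure_iff.mp (hDdense hq.1) ε' hε'
      have hx'' : dist q.1 x' < ε' := hx'
      -- rational r near q.2, nonzero
      have hrex : ∃ r : ℚ, r ≠ 0 ∧ |(r : ℝ) - q.2| < ε' := by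
        by_cases hneg : q.2 < 0
        · obtain ⟨r, hr1, hr2⟩ := exists_rat_btwn (lt_min (by linarith : q.2 < q.2 + ε') hneg)
          refine ⟨r, ?_, ?_⟩
          · have : (r : ℝ) < 0 := lt_of_lt_of_le hr2 (min_le_right _ _)
            exact_mod_cast this.ne
          · have := lt_of_lt_of_le hr2 (min_le_left _ _)
            rw [abs_lt]; constructor <;> linarith
        · push_neg at hneg
          obtain ⟨r, hr1, hr2⟩ := exists_rat_btwn (by linarith : q.2 < q.2 + ε')
          refine ⟨r, ?_, ?_⟩
          · have : (0:ℝ) < r := lt_of_le_of_lt hneg hr1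
            exact_mod_cast this.ne'
          · rw [abs_lt]; constructor <;> linarith
      obtain ⟨r, hr0, hrq⟩ := hrex
      refine ⟨(x', (r : ℝ)), ⟨?_, hx'D, r, hr0, rfl⟩, ?_⟩
      · apply hball
        rw [Metric.mem_ball, Prod.dist_eq]
        apply max_lt
        · exact lt_of_lt_of_le (by rwa [dist_comm]) (min_le_right _ _)
        · simp only [Real.dist_eq]
          exact lt_of_lt_of_le (by rwa [abs_sub_comm] at hrq) (min_le_right _ _)
      · rw [Prod.dist_eq]
        apply max_lt
        · exact lt_of_lt_of_le hx'' (min_le_left _ _)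
        · simp only [Real.dist_eq]
          exact lt_of_lt_of_le (by rwa [abs_sub_comm]) (min_le_left _ _)
    have hne : (nhdsWithin q E₀).NeBot := mem_closure_iff_nhdsWithin_neBot.mp hclos
    have h1 : Filter.Tendsto f (nhdsWithin q E₀) (nhds (f q)) :=
      (hfc q hq).mono_left (nhdsWithin_mono q hE₀S)
    have h2 : Filter.Tendsto f (nhdsWithin q E₀) (nhds 0) := by
      apply Filter.Tendsto.congr' _ tendsto_const_nhds
      filter_upwards [self_mem_nhdsWithin] with q' hq'
      exact (hf0 q' hq').symm
    have := tendsto_nhds_unique h1 h2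
    simpa only [hfdef, sub_eq_zero] using this
  constructor
  · -- differentiability
    intro x hx
    rw [hasFDerivAt_iff_isLittleO_nhds_zero, Asymptotics.isLittleO_iff]
    intro c hc
    have hxS : (x, (0 : ℝ)) ∈ S := ⟨hx, fun i => by simpa using hx⟩
    -- δ₁ : ball around x inside O
    obtain ⟨δ₁, hδ₁, hball₁⟩ := Metric.isOpen_iff.mp hO x hx
    -- continuity of Z at (x,0) within S
    set ε := c / (d + 1) with hεdef
    have hεpos : 0 < ε := div_pos hc (by positivity)
    obtain ⟨δ₂, hδ₂, hZnear⟩ := Metric.continuousWithinAt_iff.mp (hZc (x, 0) hxS) ε hεpos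
    set δ := min δ₁ δ₂ / (d + 1) with hδdef
    have hδpos : 0 < δ := by positivity
    rw [Metric.eventually_nhds_iff]
    refine ⟨δ, hδpos, ?_⟩
    intro h hdist
    rw [dist_zero_right] at hdist
    have hd1 : ((d : ℝ) + 1) * ‖h‖ < min δ₁ δ₂ := by
      rw [hδdef] at hdist
      rw [mul_comm]
      exact (lt_div_iff₀ (by positivity)).mp hdist
    set v : ℕ → EuclideanSpace ℝ (Fin d) := fun j =>
      if hj : j < d then h ⟨j, hj⟩ • EuclideanSpace.single (⟨j, hj⟩ : Fin d) (1 : ℝ) else 0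
      with hvdef
    set s : ℕ → EuclideanSpace ℝ (Fin d) := fun k => x + ∑ j ∈ Finset.range k, v j with hsdef
    set w : ℕ → U := fun j =>
      if hj : j < d then h ⟨j, hj⟩ • Z t (x, 0) ω (EuclideanSpace.single (⟨j, hj⟩ : Fin d) (1 : ℝ))
      else 0 with hwdef
    have hvn : ∀ j, ‖v j‖ ≤ ‖h‖ := by
      intro j
      by_cases hj : j < d
      · simp only [hvdef, dif_pos hj]
        rw [norm_smul, EuclideanSpace.norm_single, norm_one, mul_one, Real.norm_eq_abs]
        exact euclid_abs_apply_le_norm h _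
      · simp only [hvdef, dif_neg hj]
        simpa using norm_nonneg h
    have hsx : ∀ k, k ≤ d → ‖s k - x‖ ≤ (d : ℝ) * ‖h‖ := by
      intro k hk
      rw [hsdef]
      simp only [add_sub_cancel_left]
      calc ‖∑ j ∈ Finset.range k, v j‖ ≤ ∑ j ∈ Finset.range k, ‖v j‖ := norm_sum_le _ _
        _ ≤ ∑ _j ∈ Finset.range k, ‖h‖ := Finset.sum_le_sum (fun j _ => hvn j)
        _ = (k : ℝ) * ‖h‖ := by rw [Finset.sum_const, Finset.card_range, nsmul_eq_mul]
        _ ≤ (d : ℝ) * ‖h‖ := by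
            apply mul_le_mul_of_nonneg_right _ (norm_nonneg h)
            exact_mod_cast hk
    have hmemS : ∀ k, k ≤ d → ∀ p : ℝ, |p| ≤ ‖h‖ → (s k, p) ∈ S := by
      intro k hk p hp
      have hdist' : ∀ y : EuclideanSpace ℝ (Fin d), ‖y - x‖ ≤ ((d : ℝ) + 1) * ‖h‖ → y ∈ O := by
        intro y hy
        apply hball₁
        rw [Metric.mem_ball, dist_eq_norm]
        exact lt_of_le_of_lt hy (lt_of_lt_of_le hd1 (min_le_left _ _))
      constructor
      · exact hdist' _ (le_trans (hsx k hk) (by nlinarith [norm_nonneg h]))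
      · intro i
        apply hdist'
        have : s k + p • EuclideanSpace.single i (1 : ℝ) - x
            = (s k - x) + p • EuclideanSpace.single i (1 : ℝ) := by abel
        rw [this]
        calc ‖(s k - x) + p • EuclideanSpace.single i (1 : ℝ)‖
            ≤ ‖s k - x‖ + ‖p • EuclideanSpace.single i (1 : ℝ)‖ := norm_add_le _ _
          _ ≤ (d : ℝ) * ‖h‖ + ‖h‖ := by
              apply add_le_add (hsx k hk)
              rw [norm_smul, EuclideanSpace.norm_single, norm_one, mul_one, Real.norm_eq_abs]
              exact hp
          _ = ((d : ℝ) + 1) * ‖h‖ := by ring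
    have hZdiff : ∀ k, k ≤ d → ∀ p : ℝ, |p| ≤ ‖h‖ →
        ‖Z t (s k, p) ω - Z t (x, 0) ω‖ < ε := by
      intro k hk p hp
      have := hZnear (hmemS k hk p hp) ?_
      · rwa [dist_eq_norm] at this
      · rw [Prod.dist_eq]
        apply max_lt
        · rw [dist_eq_norm]
          exact lt_of_le_of_lt (le_trans (hsx k hk) (by nlinarith [norm_nonneg h]))
            (lt_of_lt_of_le hd1 (min_le_right _ _))
        · rw [Real.dist_eq, sub_zero]
          exact lt_of_le_of_lt (le_trans hp (by nlinarith [norm_nonneg h]))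
            (lt_of_lt_of_le hd1 (min_le_right _ _))
    -- main induction
    have main : ∀ k, k ≤ d →
        ‖X t (s k) ω - X t x ω - ∑ j ∈ Finset.range k, w j‖ ≤ (k : ℝ) * (ε * ‖h‖) := by
      intro k
      induction k with
      | zero => intro _; simp [hsdef]
      | succ k ih =>
        intro hk1
        have hkd : k < d := hk1
        have hk : k ≤ d := hkd.le
        have hs1 : s (k + 1) = s k + h ⟨k, hkd⟩ • EuclideanSpace.single (⟨k, hkd⟩ : Fin d) (1:ℝ) := by
          simp only [hsdef, Finset.sum_range_succ, hvdef, dif_pos hkd]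
          abel
        have habs : |h ⟨k, hkd⟩| ≤ ‖h‖ := euclid_abs_apply_le_norm h _
        have hkey := key (s k, h ⟨k, hkd⟩) (hmemS k hk _ habs) ⟨k, hkd⟩
        simp only at hkey
        have hsplit : X t (s (k+1)) ω - X t x ω - ∑ j ∈ Finset.range (k+1), w j
            = (X t (s k) ω - X t x ω - ∑ j ∈ Finset.range k, w j)
              + (h ⟨k, hkd⟩ • Z t (s k, h ⟨k, hkd⟩) ω (EuclideanSpace.single (⟨k, hkd⟩ : Fin d) 1)
                - w k) := by
          rw [Finset.sum_range_succ, hs1, ← hkey]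
          abel
        rw [hsplit]
        calc ‖_ + _‖ ≤ ‖X t (s k) ω - X t x ω - ∑ j ∈ Finset.range k, w j‖
              + ‖h ⟨k, hkd⟩ • Z t (s k, h ⟨k, hkd⟩) ω (EuclideanSpace.single (⟨k, hkd⟩ : Fin d) 1)
                - w k‖ := norm_add_le _ _
          _ ≤ (k : ℝ) * (ε * ‖h‖) + ε * ‖h‖ := by
              apply add_le_add (ih hk)
              have hw : w k = h ⟨k, hkd⟩ • Z t (x, 0) ω (EuclideanSpace.single (⟨k, hkd⟩ : Fin d) 1) := by
                rw [hwdef]; exact dif_pos hkd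
              rw [hw, ← smul_sub]
              rw [norm_smul, Real.norm_eq_abs]
              have hZb : ‖Z t (s k, h ⟨k, hkd⟩) ω (EuclideanSpace.single (⟨k, hkd⟩ : Fin d) 1)
                  - Z t (x, 0) ω (EuclideanSpace.single (⟨k, hkd⟩ : Fin d) 1)‖ ≤ ε := by
                have h1 : Z t (s k, h ⟨k, hkd⟩) ω (EuclideanSpace.single (⟨k, hkd⟩ : Fin d) 1)
                    - Z t (x, 0) ω (EuclideanSpace.single (⟨k, hkd⟩ : Fin d) 1)
                    = (Z t (s k, h ⟨k, hkd⟩) ω - Z t (x, 0) ω)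
                        (EuclideanSpace.single (⟨k, hkd⟩ : Fin d) 1) := by
                  simp
                rw [h1]
                calc ‖(Z t (s k, h ⟨k, hkd⟩) ω - Z t (x, 0) ω)
                      (EuclideanSpace.single (⟨k, hkd⟩ : Fin d) 1)‖
                    ≤ ‖Z t (s k, h ⟨k, hkd⟩) ω - Z t (x, 0) ω‖
                      * ‖EuclideanSpace.single (⟨k, hkd⟩ : Fin d) (1:ℝ)‖ :=
                      ContinuousLinearMap.le_opNorm _ _
                  _ ≤ ε := by
                      rw [EuclideanSpace.norm_single, norm_one, mul_one]
                      exact (hZdiff k hk _ habs).le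
              calc |h ⟨k, hkd⟩| * ‖_‖ ≤ ‖h‖ * ε :=
                    mul_le_mul habs hZb (norm_nonneg _) (norm_nonneg _)
                _ = ε * ‖h‖ := mul_comm _ _
          _ = ((k : ℝ) + 1) * (ε * ‖h‖) := by ring
          _ = ((k + 1 : ℕ) : ℝ) * (ε * ‖h‖) := by push_cast; ring
    -- finish
    have hsd : s d = x + h := by
      simp only [hsdef]
      congr 1
      rw [← Fin.sum_univ_eq_sum_range (fun j => v j) d]
      rw [show (∑ i : Fin d, v ↑i) = ∑ i : Fin d, h i • EuclideanSpace.single i (1:ℝ) from ?_]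
      · exact euclid_sum_single h
      · apply Finset.sum_congr rfl
        intro i _
        rw [hvdef]
        simp only [dif_pos i.isLt, Fin.eta]
    have hwd : ∑ j ∈ Finset.range d, w j = Z t (x, 0) ω h := by
      rw [← Fin.sum_univ_eq_sum_range (fun j => w j) d]
      have h1 : (∑ i : Fin d, w ↑i)
          = ∑ i : Fin d, h i • Z t (x, 0) ω (EuclideanSpace.single i (1:ℝ)) := by
        apply Finset.sum_congr rfl
        intro i _
        rw [hwdef]
        simp only [dif_pos i.isLt, Fin.eta]
      rw [h1]
      calc ∑ i : Fin d, h i • Z t (x, 0) ω (EuclideanSpace.single i (1:ℝ))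
          = ∑ i : Fin d, Z t (x, 0) ω (h i • EuclideanSpace.single i (1:ℝ)) := by
            refine Finset.sum_congr rfl fun i _ => ?_
            rw [ContinuousLinearMap.map_smul]
        _ = Z t (x, 0) ω (∑ i : Fin d, h i • EuclideanSpace.single i (1:ℝ)) :=
            (map_sum _ _ _).symm
        _ = Z t (x, 0) ω h := by rw [euclid_sum_single]
    have := main d le_rfl
    rw [hsd, hwd] at this
    calc ‖X t (x + h) ω - X t x ω - Z t (x, 0) ω h‖ ≤ (d : ℝ) * (ε * ‖h‖) := this
      _ ≤ c * ‖h‖ := by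
          have hd : (d : ℝ) * ε ≤ c := by
            rw [hεdef, mul_div_assoc']
            rw [div_le_iff₀ (by positivity : (0:ℝ) < (d:ℝ) + 1)]
            nlinarith [hc.le]
          calc (d : ℝ) * (ε * ‖h‖) = ((d : ℝ) * ε) * ‖h‖ := by ring
            _ ≤ c * ‖h‖ := mul_le_mul_of_nonneg_right hd (norm_nonneg h)
  · -- continuity of the derivative
    have hmap : ∀ y ∈ O, (y, (0 : ℝ)) ∈ S := fun y hy => ⟨hy, fun i => by simpa using hy⟩
    exact hZc.comp ((continuous_id.prodMk continuous_const).continuousOn) hmap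
end

section
/- Let d ∈ ℕ, let U be a real normed vector space, let O ⊆ ℝ^d (with the Euclidean inner product and standard orthonormal basis e₁, …, e_d) be an open set, let O^ℝ = {(y, p) ∈ O × ℝ : y + p e_i ∈ O for all i ∈ {1, …, d}}, let X : O → U and Z : O^ℝ → (ℝ^d →L U) be functions, let x ∈ O and r ∈ (0, ∞) satisfy {y ∈ ℝ^d : ‖y − x‖ < 2r} ⊆ O. Assume that Z is continuous at the point (x, 0) and that for all (y, p) ∈ O × ℝ with ‖y − x‖² + p² < r² and all i ∈ {1, …, d} it holds that X(y + p e_i) − X(y) = p · Z(y, p) e_i. Then X is Fréchet differentiable at x and its Fréchet derivative at x equals Z(x, 0). -/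
open scoped BigOperators RealInnerProductSpace
open Filter Topology Asymptotics

/-!
Walk from `x` to `x + h` along the coordinate axes, changing one coordinate at a time. Each step
is a difference quotient, so `X (x + h) - X x - Z (x, 0) h = ∑ i, hᵢ • (Z (yᵢ, hᵢ) - Z (x, 0)) eᵢ`
where `yᵢ` is the `i`-th corner of the walk. As `h → 0` the pairs `(yᵢ, hᵢ)` tend to `(x, 0)`
inside `O^ℝ`, so continuity of `Z` makes every summand `o(h)`.
-/

namespace EuclideanSpace

variable {d : ℕ}

def truncate (k : ℕ) (v : EuclideanSpace ℝ (Fin d)) : EuclideanSpace ℝ (Fin d) :=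
  WithLp.toLp 2 fun j => if (j : ℕ) < k then v j else 0

@[simp]
theorem truncate_apply (k : ℕ) (v : EuclideanSpace ℝ (Fin d)) (j : Fin d) :
    truncate k v j = if (j : ℕ) < k then v j else 0 :=
  rfl

@[simp]
theorem truncate_zero (v : EuclideanSpace ℝ (Fin d)) : truncate 0 v = 0 := by
  ext j; simp

theorem truncate_of_le {k : ℕ} (hk : d ≤ k) (v : EuclideanSpace ℝ (Fin d)) :
    truncate k v = v := by
  ext j; simp [j.isLt.trans_le hk]

theorem truncate_succ (i : Fin d) (v : EuclideanSpace ℝ (Fin d)) :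
    truncate (i + 1) v = truncate i v + v i • single i 1 := by
  ext j
  rcases lt_trichotomy j i with hji | rfl | hij
  · simp [hji, hji.ne, Nat.lt_succ_of_lt (Fin.lt_def.mp hji)]
  · simp
  · have := Fin.lt_def.mp hij
    simp [hij.ne', show ¬ (j : ℕ) < i + 1 by omega, show ¬ (j : ℕ) < i by omega]

theorem norm_truncate_le (k : ℕ) (v : EuclideanSpace ℝ (Fin d)) : ‖truncate k v‖ ≤ ‖v‖ := by
  refine le_of_sq_le_sq ?_ (norm_nonneg v)
  simp only [real_norm_sq_eq, truncate_apply]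
  refine Finset.sum_le_sum fun j _ => ?_
  split_ifs
  exacts [le_rfl, by simp [sq_nonneg]]

theorem norm_truncate_sq_add_sq_le (i : Fin d) (v : EuclideanSpace ℝ (Fin d)) :
    ‖truncate i v‖ ^ 2 + v i ^ 2 ≤ ‖v‖ ^ 2 := by
  have horth : ⟪truncate i v, v i • single i (1 : ℝ)⟫ = 0 := by
    simp [inner_smul_right, EuclideanSpace.inner_single_right]
  have hpyth := norm_add_sq_eq_norm_sq_add_norm_sq_real horth
  rw [← truncate_succ, norm_smul, PiLp.norm_single, norm_one, mul_one, Real.norm_eq_abs,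
    abs_mul_abs_self] at hpyth
  have := norm_truncate_le (i + 1) v
  nlinarith [norm_nonneg (truncate (i + 1) v)]

theorem sub_eq_sum_truncate_steps {G : Type*} [AddCommGroup G]
    (f : EuclideanSpace ℝ (Fin d) → G) (x h : EuclideanSpace ℝ (Fin d)) :
    f (x + h) - f x =
      ∑ i : Fin d, (f (x + truncate i h + h i • single i 1) - f (x + truncate i h)) := by
  simp_rw [add_assoc, ← truncate_succ]
  rw [Fin.sum_univ_eq_sum_range (fun k => f (x + truncate (k + 1) h) - f (x + truncate k h)),
    Finset.sum_range_sub (fun k => f (x + truncate k h)), truncate_zero, add_zero,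
    truncate_of_le le_rfl]

end EuclideanSpace

theorem Asymptotics.IsBigO.smul_isLittleO_of_tendsto_zero {α 𝕜 E F : Type*} [NormedField 𝕜]
    [NormedAddCommGroup E] [NormedSpace 𝕜 E] [SeminormedAddCommGroup F] {l : Filter α}
    {k : α → 𝕜} {g : α → F} {f : α → E} (hk : k =O[l] g) (hf : Tendsto f l (𝓝 0)) :
    (fun a => k a • f a) =o[l] g := by
  simpa using (isBigO_norm_right.2 hk).smul_isLittleO (isLittleO_one_iff ℝ |>.2 hf)

section

open EuclideanSpace

variable {d : ℕ} {U : Type*} [NormedAddCommGroup U] [NormedSpace ℝ U]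

theorem tendsto_add_truncate_coord_nhdsWithin {O : Set (EuclideanSpace ℝ (Fin d))}
    {x : EuclideanSpace ℝ (Fin d)} {r : ℝ} (hr : 0 < r)
    (hball : {y : EuclideanSpace ℝ (Fin d) | ‖y - x‖ < 2 * r} ⊆ O) (i : Fin d) :
    Tendsto (fun h : EuclideanSpace ℝ (Fin d) => (x + truncate i h, h i)) (𝓝 0)
      (𝓝[{q : EuclideanSpace ℝ (Fin d) × ℝ | q.1 ∈ O ∧
        ∀ j : Fin d, q.1 + q.2 • single j (1 : ℝ) ∈ O}] (x, 0)) := by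
  have hclose (h : EuclideanSpace ℝ (Fin d)) : ‖truncate i h‖ ≤ ‖h‖ ∧ |h i| ≤ ‖h‖ :=
    ⟨norm_truncate_le i h, PiLp.norm_apply_le h i⟩
  refine tendsto_nhdsWithin_iff.2 ⟨?_, ?_⟩
  · rw [tendsto_iff_dist_tendsto_zero]
    refine squeeze_zero (fun _ => dist_nonneg) (fun h => ?_) tendsto_norm_zero
    simpa [Prod.dist_eq, dist_eq_norm] using hclose h
  · filter_upwards [Metric.ball_mem_nhds 0 hr] with h hh
    rw [mem_ball_zero_iff] at hh
    obtain ⟨htrunc, hcoord⟩ := hclose h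
    refine ⟨hball ?_, fun j => hball ?_⟩
    · show ‖x + truncate i h - x‖ < 2 * r
      rw [add_sub_cancel_left]
      linarith
    · calc ‖x + truncate i h + h i • single j (1 : ℝ) - x‖
          = ‖truncate i h + h i • single j (1 : ℝ)‖ := by rw [add_assoc, add_sub_cancel_left]
        _ ≤ ‖truncate i h‖ + |h i| := by
          simpa [norm_smul] using norm_add_le (truncate i h) (h i • single j (1 : ℝ))
        _ < 2 * r := by linarith

theorem eventuallyEq_sum_smul_of_difference_quotients {X : EuclideanSpace ℝ (Fin d) → U}
    {Z : EuclideanSpace ℝ (Fin d) × ℝ → (EuclideanSpace ℝ (Fin d) →L[ℝ] U)}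
    (L : EuclideanSpace ℝ (Fin d) →L[ℝ] U) {x : EuclideanSpace ℝ (Fin d)} {r : ℝ} (hr : 0 < r)
    (hdq : ∀ (y : EuclideanSpace ℝ (Fin d)) (p : ℝ), ‖y - x‖ ^ 2 + p ^ 2 < r ^ 2 →
      ∀ i : Fin d,
        X (y + p • single i (1 : ℝ)) - X y = p • Z (y, p) (single i (1 : ℝ))) :
    (fun h => X (x + h) - X x - L h) =ᶠ[𝓝 0]
      fun h => ∑ i : Fin d, h i • (Z (x + truncate i h, h i) (single i 1) - L (single i 1)) := by
  filter_upwards [Metric.ball_mem_nhds 0 hr] with h hh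
  rw [mem_ball_zero_iff] at hh
  have hsplit : X (x + h) - X x - L h = (X (x + h) - L (x + h)) - (X x - L x) := by
    rw [map_add]; abel
  rw [hsplit, sub_eq_sum_truncate_steps (fun y => X y - L y)]
  refine Finset.sum_congr rfl fun i _ => ?_
  have hnear : ‖x + truncate i h - x‖ ^ 2 + h i ^ 2 < r ^ 2 := by
    rw [add_sub_cancel_left]
    nlinarith [norm_truncate_sq_add_sq_le i h, norm_nonneg h]
  rw [smul_sub, ← hdq _ _ hnear i, map_add, map_smul]
  abel

end

theorem hasFDerivAt_of_difference_quotients_general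
    (d : ℕ) {U : Type*} [NormedAddCommGroup U] [NormedSpace ℝ U]
    (O : Set (EuclideanSpace ℝ (Fin d)))
    (X : EuclideanSpace ℝ (Fin d) → U)
    (Z : EuclideanSpace ℝ (Fin d) × ℝ → (EuclideanSpace ℝ (Fin d) →L[ℝ] U))
    (x : EuclideanSpace ℝ (Fin d))
    (r : ℝ) (hr : 0 < r)
    (hball : {y : EuclideanSpace ℝ (Fin d) | ‖y - x‖ < 2 * r} ⊆ O)
    (hZcont : ContinuousWithinAt Z
      {q : EuclideanSpace ℝ (Fin d) × ℝ | q.1 ∈ O ∧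
        ∀ i : Fin d, q.1 + q.2 • EuclideanSpace.single i (1 : ℝ) ∈ O} (x, 0))
    (hdq : ∀ (y : EuclideanSpace ℝ (Fin d)) (p : ℝ), ‖y - x‖ ^ 2 + p ^ 2 < r ^ 2 →
      ∀ i : Fin d,
        X (y + p • EuclideanSpace.single i (1 : ℝ)) - X y
          = p • Z (y, p) (EuclideanSpace.single i (1 : ℝ))) :
    HasFDerivAt X (Z (x, 0)) x := by
  rw [hasFDerivAt_iff_isLittleO_nhds_zero]
  refine IsLittleO.congr' (IsLittleO.fun_sum fun i _ => ?_)
    (eventuallyEq_sum_smul_of_difference_quotients (Z (x, 0)) hr hdq).symm EventuallyEq.rfl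
  have hZ : Tendsto (fun h => Z (x + EuclideanSpace.truncate i h, h i)) (𝓝 0) (𝓝 (Z (x, 0))) :=
    hZcont.tendsto.comp (tendsto_add_truncate_coord_nhdsWithin hr hball i)
  refine (isBigO_of_le _ fun h => PiLp.norm_apply_le h i).smul_isLittleO_of_tendsto_zero ?_
  simpa using
    ((ContinuousLinearMap.apply ℝ U (EuclideanSpace.single i (1 : ℝ))).continuous.tendsto _).comp hZ
    |>.sub_const (Z (x, 0) (EuclideanSpace.single i 1))

/-- The deterministic core of Lemma 2.1 of the paper: if `X : O → U` and
`Z : O^ℝ → (ℝ^d →L U)` satisfy the difference-quotient relation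
`X(y + p eᵢ) − X(y) = p · Z(y, p) eᵢ` for all `(y, p)` with `‖y − x‖² + p² < r²`
and all coordinate directions `eᵢ`, where the ball of radius `2r` around `x` is
contained in `O`, and `Z` is continuous at `(x, 0)` (within `O^ℝ`), then `X` is
Fréchet differentiable at `x` with derivative `Z(x, 0)`. -/
theorem hasFDerivAt_of_difference_quotients
    (d : ℕ) {U : Type*} [NormedAddCommGroup U] [NormedSpace ℝ U]
    (O : Set (EuclideanSpace ℝ (Fin d))) (hO : IsOpen O)
    (X : EuclideanSpace ℝ (Fin d) → U)
    (Z : EuclideanSpace ℝ (Fin d) × ℝ → (EuclideanSpace ℝ (Fin d) →L[ℝ] U))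
    (x : EuclideanSpace ℝ (Fin d)) (hx : x ∈ O)
    (r : ℝ) (hr : 0 < r)
    (hball : {y : EuclideanSpace ℝ (Fin d) | ‖y - x‖ < 2 * r} ⊆ O)
    (hZcont : ContinuousWithinAt Z
      {q : EuclideanSpace ℝ (Fin d) × ℝ | q.1 ∈ O ∧
        ∀ i : Fin d, q.1 + q.2 • EuclideanSpace.single i (1 : ℝ) ∈ O} (x, 0))
    (hdq : ∀ (y : EuclideanSpace ℝ (Fin d)) (p : ℝ), ‖y - x‖ ^ 2 + p ^ 2 < r ^ 2 →
      ∀ i : Fin d,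
        X (y + p • EuclideanSpace.single i (1 : ℝ)) - X y
          = p • Z (y, p) (EuclideanSpace.single i (1 : ℝ))) :
    HasFDerivAt X (Z (x, 0)) x :=
  hasFDerivAt_of_difference_quotients_general d O X Z x r hr hball hZcont hdq
end

section
/- Let d ∈ ℕ, let U be a real normed vector space, let O ⊆ ℝ^d (with the Euclidean inner product and standard orthonormal basis e₁, …, e_d) be an open set, let O^ℝ = {(y, p) ∈ O × ℝ : y + p e_i ∈ O for all i ∈ {1, …, d}}, let X : O → U and Z : O^ℝ → (ℝ^d →L U) be functions, let x ∈ O and r ∈ (0, ∞) satisfy {y ∈ ℝ^d : ‖y − x‖ < 2r} ⊆ O, and assume that for all (y, p) ∈ O × ℝ with ‖y − x‖² + p² < r² and all i ∈ {1, …, d} it holds that X(y + p e_i) − X(y) = p · Z(y, p) e_i. Then for every v ∈ ℝ^d with 0 < ‖v‖ < r it holds that ‖X(x + v) − X(x) − Z(x, 0) v‖_U ≤ ‖v‖ · ( ∑_{i=1}^d ‖ Z( x + ∑_{j=1}^{i−1} ⟨v, e_j⟩ e_j , ⟨v, e_i⟩ ) e_i − Z(x, 0) e_i ‖_U² )^{1/2}.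 -/
open scoped RealInnerProductSpace

/-!
Walk from `x` to `x + v` along the basis directions, one coordinate at a time. Each step is a
difference quotient, so `X (x + v) - X x - Z (x, 0) v` telescopes into
`∑ i, ⟪v, eᵢ⟫ • (Z (Pᵢ, ⟪v, eᵢ⟫) eᵢ - Z (x, 0) eᵢ)`, `Pᵢ` being the `i`-th intermediate point;
Cauchy–Schwarz together with Parseval `∑ ⟪v, eᵢ⟫² = ‖v‖²` gives the bound. Bessel's inequality
`‖Pᵢ - x‖² + ⟪v, eᵢ⟫² ≤ ‖v‖²` keeps every step inside the region where the relation holds.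
-/

open Finset

theorem Finset.sub_eq_sum_sub_filter_lt {ι M G : Type*} [LinearOrder ι] [AddCommMonoid M]
    [AddCommGroup G] (f : M → G) (x : M) (b : ι → M) (s : Finset ι) :
    f (x + ∑ j ∈ s, b j) - f x =
      ∑ i ∈ s, (f (x + ∑ j ∈ s with j < i, b j + b i) - f (x + ∑ j ∈ s with j < i, b j)) := by
  induction s using Finset.induction_on_max with
  | empty => simp
  | insert a s ha ih =>
    have ha' : a ∉ s := fun h => lt_irrefl a (ha a h)
    have h_at_a : ({j ∈ insert a s | j < a} : Finset ι) = s := by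
      rw [filter_insert, if_neg (lt_irrefl a), filter_true_of_mem ha]
    have h_below_a : ∀ i ∈ s, ({j ∈ insert a s | j < i} : Finset ι) = {j ∈ s | j < i} :=
      fun i hi => by rw [filter_insert, if_neg (not_lt.mpr (ha i hi).le)]
    have h_rest : ∑ i ∈ s, (f (x + ∑ j ∈ insert a s with j < i, b j + b i)
          - f (x + ∑ j ∈ insert a s with j < i, b j)) = f (x + ∑ j ∈ s, b j) - f x := by
      rw [ih]
      exact sum_congr rfl fun i hi => by rw [h_below_a i hi]
    rw [sum_insert ha', sum_insert ha', h_at_a, h_rest, add_comm (b a), ← add_assoc]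
    abel

theorem Orthonormal.norm_sum_smul_sq {ι E : Type*} [NormedAddCommGroup E] [InnerProductSpace ℝ E]
    {e : ι → E} (he : Orthonormal ℝ e) (c : ι → ℝ) (s : Finset ι) :
    ‖∑ i ∈ s, c i • e i‖ ^ 2 = ∑ i ∈ s, c i ^ 2 := by
  rw [← real_inner_self_eq_norm_sq, he.inner_sum]
  simp [sq]

theorem Orthonormal.norm_sum_inner_smul_sq_add_sq_le {ι E : Type*} [NormedAddCommGroup E]
    [InnerProductSpace ℝ E] {e : ι → E} (he : Orthonormal ℝ e) (x : E) {s : Finset ι} {i : ι}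
    (hi : i ∉ s) : ‖∑ j ∈ s, ⟪x, e j⟫ • e j‖ ^ 2 + ⟪x, e i⟫ ^ 2 ≤ ‖x‖ ^ 2 := by
  classical
  rw [he.norm_sum_smul_sq, add_comm, ← sum_insert (f := fun j => ⟪x, e j⟫ ^ 2) hi]
  simpa [real_inner_comm] using he.sum_inner_products_le (s := insert i s) x

theorem norm_sum_smul_le_sqrt_mul_sqrt {ι U : Type*} [NormedAddCommGroup U] [NormedSpace ℝ U]
    (s : Finset ι) (a : ι → ℝ) (w : ι → U) :
    ‖∑ i ∈ s, a i • w i‖ ≤ √(∑ i ∈ s, a i ^ 2) * √(∑ i ∈ s, ‖w i‖ ^ 2) :=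
  calc ‖∑ i ∈ s, a i • w i‖
      ≤ ∑ i ∈ s, |a i| * ‖w i‖ := (norm_sum_le _ _).trans_eq <| by simp [norm_smul]
    _ ≤ √(∑ i ∈ s, |a i| ^ 2) * √(∑ i ∈ s, ‖w i‖ ^ 2) := Real.sum_mul_le_sqrt_mul_sqrt _ _ _
    _ = √(∑ i ∈ s, a i ^ 2) * √(∑ i ∈ s, ‖w i‖ ^ 2) := by simp only [sq_abs]

theorem OrthonormalBasis.norm_sub_sub_le_of_difference_quotient {ι E U : Type*} [Fintype ι]
    [LinearOrder ι] [LocallyFiniteOrderBot ι] [NormedAddCommGroup E] [InnerProductSpace ℝ E]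
    [NormedAddCommGroup U] [NormedSpace ℝ U] (b : OrthonormalBasis ι ℝ E) (X : E → U)
    (Z : E × ℝ → E →L[ℝ] U) (x : E) (r : ℝ)
    (hdq : ∀ (y : E) (p : ℝ), ‖y - x‖ ^ 2 + p ^ 2 < r ^ 2 →
      ∀ i, X (y + p • b i) - X y = p • Z (y, p) (b i))
    (v : E) (hv : ‖v‖ < r) :
    ‖X (x + v) - X x - Z (x, 0) v‖ ≤
      ‖v‖ * √(∑ i, ‖Z (x + ∑ j ∈ Iio i, ⟪v, b j⟫ • b j, ⟪v, b i⟫) (b i) - Z (x, 0) (b i)‖ ^ 2) := by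
  have hv_sum : ∑ i, ⟪v, b i⟫ • b i = v := by simpa [real_inner_comm] using b.sum_repr' v
  have htel : X (x + v) - X x =
      ∑ i, ⟪v, b i⟫ • Z (x + ∑ j ∈ Iio i, ⟪v, b j⟫ • b j, ⟪v, b i⟫) (b i) := by
    conv_lhs => rw [← hv_sum]
    rw [sub_eq_sum_sub_filter_lt]
    refine sum_congr rfl fun i _ => ?_
    rw [filter_gt_eq_Iio]
    refine hdq _ _ ?_ i
    calc ‖x + ∑ j ∈ Iio i, ⟪v, b j⟫ • b j - x‖ ^ 2 + ⟪v, b i⟫ ^ 2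
        ≤ ‖v‖ ^ 2 := by
          simpa using b.orthonormal.norm_sum_inner_smul_sq_add_sq_le v (s := Iio i) (by simp)
      _ < r ^ 2 := by gcongr
  have hZ : Z (x, 0) v = ∑ i, ⟪v, b i⟫ • Z (x, 0) (b i) := by
    conv_lhs => rw [← hv_sum]
    simp
  rw [htel, hZ, ← sum_sub_distrib]
  simp_rw [← smul_sub]
  refine (norm_sum_smul_le_sqrt_mul_sqrt _ _ _).trans_eq ?_
  rw [b.sum_sq_inner_left, Real.sqrt_sq (norm_nonneg v)]

theorem telescoping_difference_quotient_estimate_general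
    (d : ℕ) {U : Type*} [NormedAddCommGroup U] [NormedSpace ℝ U]
    (X : EuclideanSpace ℝ (Fin d) → U)
    (Z : EuclideanSpace ℝ (Fin d) × ℝ → (EuclideanSpace ℝ (Fin d) →L[ℝ] U))
    (x : EuclideanSpace ℝ (Fin d))
    (r : ℝ)
    (hdq : ∀ (y : EuclideanSpace ℝ (Fin d)) (p : ℝ), ‖y - x‖ ^ 2 + p ^ 2 < r ^ 2 →
      ∀ i : Fin d,
        X (y + p • EuclideanSpace.single i (1 : ℝ)) - X y
          = p • Z (y, p) (EuclideanSpace.single i (1 : ℝ))) :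
    ∀ v : EuclideanSpace ℝ (Fin d), 0 < ‖v‖ → ‖v‖ < r →
      ‖X (x + v) - X x - Z (x, 0) v‖
        ≤ ‖v‖ * Real.sqrt (∑ i : Fin d,
            ‖Z (x + ∑ j ∈ Finset.Iio i,
                  ⟪v, EuclideanSpace.single j (1 : ℝ)⟫ • EuclideanSpace.single j (1 : ℝ),
                ⟪v, EuclideanSpace.single i (1 : ℝ)⟫) (EuclideanSpace.single i (1 : ℝ))
              - Z (x, 0) (EuclideanSpace.single i (1 : ℝ))‖ ^ 2) := by
  intro v _ hv
  simpa using (EuclideanSpace.basisFun (Fin d) ℝ).norm_sub_sub_le_of_difference_quotient X Z x r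
    (by simpa using hdq) v hv

/-- The telescoping-sum/Cauchy–Schwarz estimate from the proof of Lemma 2.1 of the
paper: if `X : O → U` and `Z : O^ℝ → (ℝ^d →L U)` satisfy the difference-quotient
relation `X(y + p eᵢ) − X(y) = p · Z(y, p) eᵢ` for all `(y, p)` with
`‖y − x‖² + p² < r²` and all coordinate directions `eᵢ`, where the ball of radius
`2r` around `x` is contained in `O`, then for every `v` with `0 < ‖v‖ < r`,
`‖X(x + v) − X(x) − Z(x, 0) v‖
  ≤ ‖v‖ · ( ∑_{i=1}^d ‖ Z(x + ∑_{j<i} ⟨v,eⱼ⟩ eⱼ, ⟨v,eᵢ⟩) eᵢ − Z(x,0) eᵢ ‖² )^{1/2}`. -/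
theorem telescoping_difference_quotient_estimate
    (d : ℕ) {U : Type*} [NormedAddCommGroup U] [NormedSpace ℝ U]
    (O : Set (EuclideanSpace ℝ (Fin d))) (hO : IsOpen O)
    (X : EuclideanSpace ℝ (Fin d) → U)
    (Z : EuclideanSpace ℝ (Fin d) × ℝ → (EuclideanSpace ℝ (Fin d) →L[ℝ] U))
    (x : EuclideanSpace ℝ (Fin d)) (hx : x ∈ O)
    (r : ℝ) (hr : 0 < r)
    (hball : {y : EuclideanSpace ℝ (Fin d) | ‖y - x‖ < 2 * r} ⊆ O)
    (hdq : ∀ (y : EuclideanSpace ℝ (Fin d)) (p : ℝ), ‖y - x‖ ^ 2 + p ^ 2 < r ^ 2 →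
      ∀ i : Fin d,
        X (y + p • EuclideanSpace.single i (1 : ℝ)) - X y
          = p • Z (y, p) (EuclideanSpace.single i (1 : ℝ))) :
    ∀ v : EuclideanSpace ℝ (Fin d), 0 < ‖v‖ → ‖v‖ < r →
      ‖X (x + v) - X x - Z (x, 0) v‖
        ≤ ‖v‖ * Real.sqrt (∑ i : Fin d,
            ‖Z (x + ∑ j ∈ Finset.Iio i,
                  ⟪v, EuclideanSpace.single j (1 : ℝ)⟫ • EuclideanSpace.single j (1 : ℝ),
                ⟪v, EuclideanSpace.single i (1 : ℝ)⟫) (EuclideanSpace.single i (1 : ℝ))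
              - Z (x, 0) (EuclideanSpace.single i (1 : ℝ))‖ ^ 2) :=
  telescoping_difference_quotient_estimate_general d X Z x r hdq
end

section
/- Let d, m ∈ ℕ, let O ⊆ ℝ^d be an open set, let 𝒪 ⊆ O be a convex set, let T ∈ (0, ∞), p ∈ [2, ∞), δ ∈ (0, ∞), q₀, q₁ ∈ (0, ∞], α₀, α₁ ∈ [0, ∞), let φ : [0, T] → [0, ∞), V₀ : O → [0, ∞), and V̄ : [0, T] × 𝒪 → ℝ be functions, let μ : O → ℝ^d be continuously Fréchet differentiable and let σ : O → M_{d×m}(ℝ) (d×m real matrices with the Frobenius norm ‖·‖_F) be continuously Fréchet differentiable with Fréchet derivatives μ' and σ'. Assume that for all t ∈ [0, T), all x, y ∈ 𝒪, and all h ∈ ℝ^d \ {0} it holds that ⟨h, (∫₀¹ μ'(λx + (1−λ)y) dλ) h⟩ + δ‖h‖² + ((1+δ)/2) ‖(∫₀¹ σ'(λx + (1−λ)y) dλ) h‖_F² + (p − 1 + pδ) ‖((∫₀¹ σ'(λx + (1−λ)y) dλ) h)ᵀ h‖² / ‖h‖² ≤ ‖h‖² ( φ(t) + (V₀(x) + V₀(y))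 / (2 q₀ T e^{α₀ t}) + (V̄(t, x) + V̄(t, y)) / (2 q₁ e^{α₁ t}) ). Then for all t ∈ [0, T) and all x, y ∈ 𝒪 with x ≠ y it holds that ⟨x − y, μ(x) − μ(y)⟩ + (1/2) ‖σ(x) − σ(y)‖_F² + (p − 1 + pδ) ‖(σ(x) − σ(y))ᵀ (x − y)‖² / ‖x − y‖² ≤ ‖x − y‖² ( φ(t) + (V₀(x) + V₀(y)) / (2 q₀ T e^{α₀ t}) + (V̄(t, x) + V̄(t, y)) / (2 q₁ e^{α₁ t}) ). -/
open scoped BigOperators RealInnerProductSpace ENNReal NNReal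

attribute [local instance] Matrix.frobeniusNormedAddCommGroup Matrix.frobeniusNormedSpace

/-- The operator-norm group structure on `ℝ^d →L[ℝ] M_{d×m}(ℝ)` (Frobenius norm on the target),
which instance search no longer finds by itself. -/
noncomputable def frobeniusCLMNormedAddCommGroup (d m : ℕ) :
    NormedAddCommGroup (EuclideanSpace ℝ (Fin d) →L[ℝ] Matrix (Fin d) (Fin m) ℝ) :=
  ContinuousLinearMap.toNormedAddCommGroup

attribute [local instance] frobeniusCLMNormedAddCommGroup

/-- The corresponding normed-space structure, likewise no longer found by instance search. -/
noncomputable def frobeniusCLMNormedSpace (d m : ℕ) :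
    NormedSpace ℝ (EuclideanSpace ℝ (Fin d) →L[ℝ] Matrix (Fin d) (Fin m) ℝ) :=
  ContinuousLinearMap.toNormedSpace

attribute [local instance] frobeniusCLMNormedSpace

/-!
By the fundamental theorem of calculus along the segment from `y` to `x`,
`μ x - μ y = (∫₀¹ μ'(λx + (1-λ)y) dλ) (x - y)` and likewise for `σ`. Taking `h = x - y` in the
hypothesis therefore turns its left-hand side into the left-hand side of the conclusion plus the
nonnegative terms `δ ‖x - y‖²` and `(δ/2) ‖σ x - σ y‖_F²`.
-/

section SegmentFTC

variable {E F : Type*} [NormedAddCommGroup E] [NormedSpace ℝ E]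

theorem smul_add_one_sub_smul_mem_segment {x y : E} {l : ℝ} (hl : l ∈ Set.Icc (0 : ℝ) 1) :
    l • x + (1 - l) • y ∈ segment ℝ x y :=
  ⟨l, 1 - l, hl.1, sub_nonneg.2 hl.2, add_sub_cancel _ _, rfl⟩

theorem hasDerivAt_smul_add_one_sub_smul (x y : E) (l : ℝ) :
    HasDerivAt (fun l : ℝ => l • x + (1 - l) • y) (x - y) l := by
  refine (((hasDerivAt_id l).smul_const x).add
    (((hasDerivAt_const l (1 : ℝ)).sub (hasDerivAt_id l)).smul_const y)).congr_deriv ?_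
  module

variable [NormedAddCommGroup F] [NormedSpace ℝ F] [CompleteSpace F]

theorem sub_eq_intervalIntegral_fderiv_segment_apply {f : E → F} {f' : E → E →L[ℝ] F}
    {x y : E} (hf : ∀ z ∈ segment ℝ x y, HasFDerivAt f (f' z) z)
    (hf' : ContinuousOn f' (segment ℝ x y)) :
    f x - f y = (∫ l in (0 : ℝ)..1, f' (l • x + (1 - l) • y)) (x - y) := by
  have hmem : Set.MapsTo (fun l : ℝ => l • x + (1 - l) • y) (Set.uIcc 0 1) (segment ℝ x y) :=
    fun l hl => smul_add_one_sub_smul_mem_segment (by rwa [Set.uIcc_of_le zero_le_one] at hl)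
  have hcont : ContinuousOn (fun l : ℝ => f' (l • x + (1 - l) • y)) (Set.uIcc 0 1) :=
    hf'.comp (by fun_prop) hmem
  have hderiv : ∀ l ∈ Set.uIcc (0 : ℝ) 1, HasDerivAt (fun l : ℝ => f (l • x + (1 - l) • y))
      (f' (l • x + (1 - l) • y) (x - y)) l := fun l hl =>
    (hf _ (hmem hl)).comp_hasDerivAt l (hasDerivAt_smul_add_one_sub_smul x y l)
  rw [ContinuousLinearMap.intervalIntegral_apply hcont.intervalIntegrable,
    intervalIntegral.integral_eq_sub_of_hasDerivAt hderiv
      ((ContinuousLinearMap.apply ℝ F (x - y)).continuous.comp_continuousOn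
        hcont).intervalIntegrable]
  simp

end SegmentFTC

/-- `qᵢ = ∞` is encoded through `ENNReal.toReal ∞ = 0` and `a / 0 = 0`, making the corresponding
term vanish; the Frobenius norm is written out as a sum of squared entries, and `Aᵀ Y` as the
vector `j ↦ ∑ i, A i j * Y i`. -/
theorem increment_monotonicity_of_derivative_monotonicity_general
    (d m : ℕ)
    (O : Set (EuclideanSpace ℝ (Fin d)))
    (𝒪 : Set (EuclideanSpace ℝ (Fin d))) (h𝒪O : 𝒪 ⊆ O) (h𝒪conv : Convex ℝ 𝒪)
    (T p δ : ℝ) (hδ : 0 < δ)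
    (q₀ q₁ : ℝ≥0∞)
    (α₀ α₁ : ℝ)
    (φ : ℝ → ℝ)
    (V₀ : EuclideanSpace ℝ (Fin d) → ℝ)
    (Vbar : ℝ → EuclideanSpace ℝ (Fin d) → ℝ)
    (μ : EuclideanSpace ℝ (Fin d) → EuclideanSpace ℝ (Fin d))
    (μ' : EuclideanSpace ℝ (Fin d) →
      (EuclideanSpace ℝ (Fin d) →L[ℝ] EuclideanSpace ℝ (Fin d)))
    (σ : EuclideanSpace ℝ (Fin d) → Matrix (Fin d) (Fin m) ℝ)
    (σ' : EuclideanSpace ℝ (Fin d) →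
      (EuclideanSpace ℝ (Fin d) →L[ℝ] Matrix (Fin d) (Fin m) ℝ))
    (hμ : ∀ z ∈ O, HasFDerivAt μ (μ' z) z) (hμ'c : ContinuousOn μ' O)
    (hσ : ∀ z ∈ O, HasFDerivAt σ (σ' z) z) (hσ'c : ContinuousOn σ' O)
    (hyp : ∀ t ∈ Set.Ico (0 : ℝ) T, ∀ x ∈ 𝒪, ∀ y ∈ 𝒪,
      ∀ h : EuclideanSpace ℝ (Fin d), h ≠ 0 →
      ⟪h, (∫ l in (0:ℝ)..1, μ' (l • x + (1 - l) • y)) h⟫ + δ * ‖h‖ ^ 2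
        + ((1 + δ) / 2) *
            (∑ i : Fin d, ∑ j : Fin m,
              (((∫ l in (0:ℝ)..1, σ' (l • x + (1 - l) • y)) h) i j) ^ 2)
        + (p - 1 + p * δ) *
            (∑ j : Fin m, (∑ i : Fin d,
              ((∫ l in (0:ℝ)..1, σ' (l • x + (1 - l) • y)) h) i j * h i) ^ 2) / ‖h‖ ^ 2
      ≤ ‖h‖ ^ 2 * (φ t + (V₀ x + V₀ y) / (2 * q₀.toReal * T * Real.exp (α₀ * t))
          + (Vbar t x + Vbar t y) / (2 * q₁.toReal * Real.exp (α₁ * t)))) :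
    ∀ t ∈ Set.Ico (0 : ℝ) T, ∀ x ∈ 𝒪, ∀ y ∈ 𝒪, x ≠ y →
      ⟪x - y, μ x - μ y⟫
        + (1 / 2) * (∑ i : Fin d, ∑ j : Fin m, ((σ x - σ y) i j) ^ 2)
        + (p - 1 + p * δ) *
            (∑ j : Fin m, (∑ i : Fin d, (σ x - σ y) i j * (x - y) i) ^ 2) / ‖x - y‖ ^ 2
      ≤ ‖x - y‖ ^ 2 * (φ t + (V₀ x + V₀ y) / (2 * q₀.toReal * T * Real.exp (α₀ * t))
          + (Vbar t x + Vbar t y) / (2 * q₁.toReal * Real.exp (α₁ * t))) := by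
  intro t ht x hx y hy hxy
  have hseg : segment ℝ x y ⊆ O := (h𝒪conv.segment_subset hx hy).trans h𝒪O
  have hμeq := sub_eq_intervalIntegral_fderiv_segment_apply
    (fun z hz => hμ z (hseg hz)) (hμ'c.mono hseg)
  have hσeq : σ x - σ y = (∫ l in (0 : ℝ)..1, σ' (l • x + (1 - l) • y)) (x - y) :=
    sub_eq_intervalIntegral_fderiv_segment_apply (fun z hz => hσ z (hseg hz)) (hσ'c.mono hseg)
  have key := hyp t ht x hx y hy (x - y) (sub_ne_zero.mpr hxy)
  rw [← hμeq, ← hσeq] at key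
  have hS : 0 ≤ ∑ i : Fin d, ∑ j : Fin m, ((σ x - σ y) i j) ^ 2 :=
    Finset.sum_nonneg fun i _ => Finset.sum_nonneg fun j _ => sq_nonneg _
  linarith [mul_nonneg hδ.le (sq_nonneg ‖x - y‖), mul_nonneg hδ.le hS]

/-- Lemma 4.2 of the paper (finite-dimensional setting): if the coefficient functions
`μ : O → ℝ^d` and `σ : O → M_{d×m}(ℝ)` are continuously Fréchet differentiable with
derivatives `μ'`, `σ'`, and the derivative-level local monotonicity condition holds on the
convex set `𝒪 ⊆ O`, then the corresponding increment-level monotonicity condition holds.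
Here `q₀, q₁ ∈ (0, ∞]` (so that the corresponding terms vanish when `qᵢ = ∞`, via
`ENNReal.toReal` and the convention `a / 0 = 0` in `ℝ`), the Frobenius norm is written
out as a sum of squares of entries, and `Aᵀ Y` as the vector `j ↦ ∑ i, A i j * Y i`. -/
theorem increment_monotonicity_of_derivative_monotonicity
    (d m : ℕ)
    (O : Set (EuclideanSpace ℝ (Fin d))) (hO : IsOpen O)
    (𝒪 : Set (EuclideanSpace ℝ (Fin d))) (h𝒪O : 𝒪 ⊆ O) (h𝒪conv : Convex ℝ 𝒪)
    (T p δ : ℝ) (hT : 0 < T) (hp : 2 ≤ p) (hδ : 0 < δ)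
    (q₀ q₁ : ℝ≥0∞) (hq₀ : 0 < q₀) (hq₁ : 0 < q₁)
    (α₀ α₁ : ℝ) (hα₀ : 0 ≤ α₀) (hα₁ : 0 ≤ α₁)
    (φ : ℝ → ℝ) (hφ : ∀ t ∈ Set.Icc (0 : ℝ) T, 0 ≤ φ t)
    (V₀ : EuclideanSpace ℝ (Fin d) → ℝ) (hV₀ : ∀ x ∈ O, 0 ≤ V₀ x)
    (Vbar : ℝ → EuclideanSpace ℝ (Fin d) → ℝ)
    (μ : EuclideanSpace ℝ (Fin d) → EuclideanSpace ℝ (Fin d))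
    (μ' : EuclideanSpace ℝ (Fin d) →
      (EuclideanSpace ℝ (Fin d) →L[ℝ] EuclideanSpace ℝ (Fin d)))
    (σ : EuclideanSpace ℝ (Fin d) → Matrix (Fin d) (Fin m) ℝ)
    (σ' : EuclideanSpace ℝ (Fin d) →
      (EuclideanSpace ℝ (Fin d) →L[ℝ] Matrix (Fin d) (Fin m) ℝ))
    (hμ : ∀ z ∈ O, HasFDerivAt μ (μ' z) z) (hμ'c : ContinuousOn μ' O)
    (hσ : ∀ z ∈ O, HasFDerivAt σ (σ' z) z) (hσ'c : ContinuousOn σ' O)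
    (hyp : ∀ t ∈ Set.Ico (0 : ℝ) T, ∀ x ∈ 𝒪, ∀ y ∈ 𝒪,
      ∀ h : EuclideanSpace ℝ (Fin d), h ≠ 0 →
      ⟪h, (∫ l in (0:ℝ)..1, μ' (l • x + (1 - l) • y)) h⟫ + δ * ‖h‖ ^ 2
        + ((1 + δ) / 2) *
            (∑ i : Fin d, ∑ j : Fin m,
              (((∫ l in (0:ℝ)..1, σ' (l • x + (1 - l) • y)) h) i j) ^ 2)
        + (p - 1 + p * δ) *
            (∑ j : Fin m, (∑ i : Fin d,
              ((∫ l in (0:ℝ)..1, σ' (l • x + (1 - l) • y)) h) i j * h i) ^ 2) / ‖h‖ ^ 2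
      ≤ ‖h‖ ^ 2 * (φ t + (V₀ x + V₀ y) / (2 * q₀.toReal * T * Real.exp (α₀ * t))
          + (Vbar t x + Vbar t y) / (2 * q₁.toReal * Real.exp (α₁ * t)))) :
    ∀ t ∈ Set.Ico (0 : ℝ) T, ∀ x ∈ 𝒪, ∀ y ∈ 𝒪, x ≠ y →
      ⟪x - y, μ x - μ y⟫
        + (1 / 2) * (∑ i : Fin d, ∑ j : Fin m, ((σ x - σ y) i j) ^ 2)
        + (p - 1 + p * δ) *
            (∑ j : Fin m, (∑ i : Fin d, (σ x - σ y) i j * (x - y) i) ^ 2) / ‖x - y‖ ^ 2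
      ≤ ‖x - y‖ ^ 2 * (φ t + (V₀ x + V₀ y) / (2 * q₀.toReal * T * Real.exp (α₀ * t))
          + (Vbar t x + Vbar t y) / (2 * q₁.toReal * Real.exp (α₁ * t))) :=
  increment_monotonicity_of_derivative_monotonicity_general d m O 𝒪 h𝒪O h𝒪conv T p δ hδ q₀ q₁ α₀ α₁
    φ V₀ Vbar μ μ' σ σ' hμ hμ'c hσ hσ'c hyp
end

section
/- Let d, m ∈ ℕ, p ∈ [2, ∞), δ ∈ (0, ∞), K ∈ ℝ, let A : ℝ^d → ℝ^d and B : ℝ^d → M_{d×m}(ℝ) be linear maps, and assume that for all Y ∈ ℝ^d \ {0} it holds that ⟨Y, A Y⟩ + δ‖Y‖² + ((1 + δ)/2) ‖B Y‖_F² + (p − 1 + pδ) ‖(B Y)ᵀ Y‖² / ‖Y‖² ≤ K ‖Y‖². Then for all Y ∈ ℝ^d \ {0}, all ζ ∈ ℝ^d, and all ξ ∈ M_{d×m}(ℝ) it holds that ⟨Y, A Y + ζ⟩ + (1/2) ‖B Y + ξ‖_F² + ((p − 2)/2) ‖(B Y + ξ)ᵀ Y‖² / ‖Y‖² ≤ K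 ‖Y‖² + ((p − 1)(1 + δ⁻¹)/2) ‖ξ‖_F² + (1/(4δ)) ‖ζ‖². -/
/-!
Split `ζ` off the drift by Young's inequality `⟨Y, ζ⟩ ≤ δ‖Y‖² + ‖ζ‖²/(4δ)`, and split `ξ` off
both diffusion terms by the weighted inequality `(a + b)² ≤ (1 + δ)a² + (1 + δ⁻¹)b²`, applied
entrywise to `B Y + ξ` and columnwise to `(B Y + ξ)ᵀ Y`, together with the Cauchy–Schwarz bound
`‖ξᵀ Y‖² ≤ ‖ξ‖_F² ‖Y‖²`. The hypothesis then absorbs the `A`, `B` and `δ‖Y‖²` terms, because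
`(p − 2)(1 + δ)/2 ≤ p − 1 + pδ`.
-/

open scoped RealInnerProductSpace

theorem add_sq_le_one_add_mul_sq_add_one_add_inv_mul_sq {δ : ℝ} (hδ : 0 < δ) (a b : ℝ) :
    (a + b) ^ 2 ≤ (1 + δ) * a ^ 2 + (1 + δ⁻¹) * b ^ 2 := by
  have hδinv : δ * δ⁻¹ = 1 := mul_inv_cancel₀ hδ.ne'
  -- `δ⁻¹ (δ a - b)² ≥ 0` is the difference of the two sides
  nlinarith [mul_nonneg (inv_nonneg.mpr hδ.le) (sq_nonneg (δ * a - b))]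

theorem Finset.sum_add_sq_le {ι : Type*} (s : Finset ι) (f g : ι → ℝ) {δ : ℝ} (hδ : 0 < δ) :
    ∑ i ∈ s, (f i + g i) ^ 2 ≤ (1 + δ) * ∑ i ∈ s, f i ^ 2 + (1 + δ⁻¹) * ∑ i ∈ s, g i ^ 2 := by
  rw [Finset.mul_sum, Finset.mul_sum, ← Finset.sum_add_distrib]
  exact Finset.sum_le_sum fun i _ => add_sq_le_one_add_mul_sq_add_one_add_inv_mul_sq hδ _ _

theorem real_inner_le_mul_norm_sq_add_inv_mul_norm_sq {E : Type*} [NormedAddCommGroup E]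
    [InnerProductSpace ℝ E] {δ : ℝ} (hδ : 0 < δ) (x y : E) :
    ⟪x, y⟫ ≤ δ * ‖x‖ ^ 2 + (1 / (4 * δ)) * ‖y‖ ^ 2 := by
  have hyoung : ‖x‖ * ‖y‖ ≤ δ * ‖x‖ ^ 2 + ‖y‖ ^ 2 / (4 * δ) := by
    rw [← sub_le_iff_le_add', le_div_iff₀ (by positivity)]
    nlinarith [sq_nonneg (2 * δ * ‖x‖ - ‖y‖)]
  calc ⟪x, y⟫ ≤ ‖x‖ * ‖y‖ := real_inner_le_norm x y
    _ ≤ δ * ‖x‖ ^ 2 + (1 / (4 * δ)) * ‖y‖ ^ 2 := by rwa [one_div_mul_eq_div]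

theorem sum_sq_sum_mul_le {ι κ : Type*} [Fintype ι] [Fintype κ] (M : ι → κ → ℝ) (y : ι → ℝ) :
    ∑ j, (∑ i, M i j * y i) ^ 2 ≤ (∑ i, ∑ j, M i j ^ 2) * ∑ i, y i ^ 2 := by
  calc ∑ j, (∑ i, M i j * y i) ^ 2 ≤ ∑ j, (∑ i, M i j ^ 2) * ∑ i, y i ^ 2 :=
        Finset.sum_le_sum fun j _ => Finset.sum_mul_sq_le_sq_mul_sq _ _ _
    _ = (∑ i, ∑ j, M i j ^ 2) * ∑ i, y i ^ 2 := by rw [← Finset.sum_mul, Finset.sum_comm]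

theorem Matrix.sum_sum_add_sq_le {ι κ : Type*} [Fintype ι] [Fintype κ] (M N : Matrix ι κ ℝ)
    {δ : ℝ} (hδ : 0 < δ) :
    ∑ i, ∑ j, ((M + N) i j) ^ 2
      ≤ (1 + δ) * ∑ i, ∑ j, (M i j) ^ 2 + (1 + δ⁻¹) * ∑ i, ∑ j, (N i j) ^ 2 := by
  simp only [Matrix.add_apply, ← Fintype.sum_prod_type']
  exact Finset.sum_add_sq_le _ _ _ hδ

theorem Matrix.sum_sq_sum_add_mul_le {ι κ : Type*} [Fintype ι] [Fintype κ] (M N : Matrix ι κ ℝ)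
    (y : ι → ℝ) {δ : ℝ} (hδ : 0 < δ) :
    ∑ j, (∑ i, (M + N) i j * y i) ^ 2
      ≤ (1 + δ) * ∑ j, (∑ i, M i j * y i) ^ 2
        + (1 + δ⁻¹) * ((∑ i, ∑ j, (N i j) ^ 2) * ∑ i, y i ^ 2) := by
  have hsplit (j : κ) : ∑ i, (M + N) i j * y i = ∑ i, M i j * y i + ∑ i, N i j * y i := by
    simp only [Matrix.add_apply, add_mul, Finset.sum_add_distrib]
  simp only [hsplit]
  grw [Finset.sum_add_sq_le _ _ _ hδ, sum_sq_sum_mul_le N y]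

/-- The combined drift–diffusion perturbation estimate: if the linear maps
`A : ℝ^d → ℝ^d` and `B : ℝ^d → M_{d×m}(ℝ)` satisfy, for all `Y ≠ 0`,
`⟨Y, A Y⟩ + δ‖Y‖² + ((1 + δ)/2) ‖B Y‖_F² + (p − 1 + pδ) ‖(B Y)ᵀ Y‖²/‖Y‖² ≤ K ‖Y‖²`,
then for all `Y ≠ 0`, `ζ ∈ ℝ^d`, `ξ ∈ M_{d×m}(ℝ)`,
`⟨Y, A Y + ζ⟩ + (1/2) ‖B Y + ξ‖_F² + ((p − 2)/2) ‖(B Y + ξ)ᵀ Y‖²/‖Y‖²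
  ≤ K ‖Y‖² + ((p − 1)(1 + δ⁻¹)/2) ‖ξ‖_F² + (1/(4δ)) ‖ζ‖²`.
(The Frobenius norm is written out as a sum of squares of entries, and `Aᵀ Y` as the
vector `j ↦ ∑ i, A i j * Y i`.) -/
theorem drift_diffusion_perturbation_estimate
    (d m : ℕ) (p δ K : ℝ) (hp : 2 ≤ p) (hδ : 0 < δ)
    (A : EuclideanSpace ℝ (Fin d) →ₗ[ℝ] EuclideanSpace ℝ (Fin d))
    (B : EuclideanSpace ℝ (Fin d) →ₗ[ℝ] Matrix (Fin d) (Fin m) ℝ)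
    (hAB : ∀ Y : EuclideanSpace ℝ (Fin d), Y ≠ 0 →
      ⟪Y, A Y⟫ + δ * ‖Y‖ ^ 2
        + ((1 + δ) / 2) * (∑ i : Fin d, ∑ j : Fin m, (B Y i j) ^ 2)
        + (p - 1 + p * δ) * (∑ j : Fin m, (∑ i : Fin d, B Y i j * Y i) ^ 2) / ‖Y‖ ^ 2
      ≤ K * ‖Y‖ ^ 2) :
    ∀ Y : EuclideanSpace ℝ (Fin d), Y ≠ 0 →
      ∀ (ζ : EuclideanSpace ℝ (Fin d)) (ξ : Matrix (Fin d) (Fin m) ℝ),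
      ⟪Y, A Y + ζ⟫ + (1 / 2) * (∑ i : Fin d, ∑ j : Fin m, ((B Y + ξ) i j) ^ 2)
        + ((p - 2) / 2) * (∑ j : Fin m, (∑ i : Fin d, (B Y + ξ) i j * Y i) ^ 2) / ‖Y‖ ^ 2
      ≤ K * ‖Y‖ ^ 2 + ((p - 1) * (1 + δ⁻¹) / 2) * (∑ i : Fin d, ∑ j : Fin m, (ξ i j) ^ 2)
        + (1 / (4 * δ)) * ‖ζ‖ ^ 2 := by
  intro Y hY ζ ξ
  have hu : 0 < ‖Y‖ ^ 2 := by positivity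
  have hnorm : ∑ i, Y i ^ 2 = ‖Y‖ ^ 2 := by simp [EuclideanSpace.norm_sq_eq]
  set G := ∑ j, (∑ i, B Y i j * Y i) ^ 2
  set X := ∑ i, ∑ j, (ξ i j) ^ 2
  have hcol : (∑ j, (∑ i, (B Y + ξ) i j * Y i) ^ 2) / ‖Y‖ ^ 2
      ≤ (1 + δ) * (G / ‖Y‖ ^ 2) + (1 + δ⁻¹) * X := by
    rw [div_le_iff₀ hu]
    grw [Matrix.sum_sq_sum_add_mul_le _ _ _ hδ, hnorm]
    exact le_of_eq (by field_simp; ring)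
  have hcoef : (p - 2) / 2 * (1 + δ) * (G / ‖Y‖ ^ 2) ≤ (p - 1 + p * δ) * (G / ‖Y‖ ^ 2) := by
    gcongr
    nlinarith
  have hp2 : 0 ≤ (p - 2) / 2 := by linarith
  have hYAB := hAB Y hY
  rw [mul_div_assoc] at hYAB
  rw [inner_add_right, mul_div_assoc, mul_div_assoc]
  linarith [real_inner_le_mul_norm_sq_add_inv_mul_norm_sq hδ Y ζ,
    Matrix.sum_sum_add_sq_le (B Y) ξ hδ, mul_le_mul_of_nonneg_left hcol hp2]
end
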